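/- arXiv:1707.08345 — 5 statements merged into one kernel-verified Lean document; each statement's English description precedes it below -/
import Mathlib

section
/- For every real β with 1/2 < β < 1 and every integer l with l ≥ 2, the fourth-difference expression f_β(l) = (l+2)^(3-2β) - 4(l+1)^(3-2β) + 6·l^(3-2β) - 4(l-1)^(3-2β) + (l-2)^(3-2β) is strictly positive. -/
/-!
Put `p = 3 - 2β ∈ (1, 2)` and `Δ²f(x) = f(x + 1) - 2 f(x) + f(x - 1)`. The expression
is `Δ²(Δ²(x ↦ x ^ p))(l)`, so it suffices that `g = Δ²(x ↦ x ^ p)` is strictly convex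
on `[1, ∞)`. Since `Δ²` commutes with differentiation, `g'' = Δ²(x ↦ p (p - 1) x ^ (p - 2))`
on `(1, ∞)`, and this is positive because `x ↦ x ^ (p - 2)` is strictly convex on `(0, ∞)`.
-/

open Set

noncomputable def secondDiff (f : ℝ → ℝ) (x : ℝ) : ℝ := f (x + 1) - 2 * f x + f (x - 1)

theorem secondDiff_secondDiff (f : ℝ → ℝ) (x : ℝ) :
    secondDiff (secondDiff f) x =
      f (x + 2) - 4 * f (x + 1) + 6 * f x - 4 * f (x - 1) + f (x - 2) := by
  simp only [secondDiff]
  rw [show x + 1 + 1 = x + 2 by ring, show x + 1 - 1 = x by ring, show x - 1 + 1 = x by ring,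
    show x - 1 - 1 = x - 2 by ring]
  ring

theorem StrictConvexOn.secondDiff_pos {s : Set ℝ} {f : ℝ → ℝ} (hf : StrictConvexOn ℝ s f)
    {x : ℝ} (hprev : x - 1 ∈ s) (hnext : x + 1 ∈ s) : 0 < secondDiff f x := by
  have h := hf.2 hprev hnext (by linarith) (by norm_num : (0 : ℝ) < 1 / 2)
    (by norm_num : (0 : ℝ) < 1 / 2) (by norm_num)
  rw [smul_eq_mul, smul_eq_mul, smul_eq_mul, smul_eq_mul,
    show 1 / 2 * (x - 1) + 1 / 2 * (x + 1) = x by ring] at h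
  unfold secondDiff
  linarith

theorem StrictConvexOn.const_mul {s : Set ℝ} {f : ℝ → ℝ} {c : ℝ} (hc : 0 < c)
    (hf : StrictConvexOn ℝ s f) : StrictConvexOn ℝ s fun x => c * f x := by
  refine ⟨hf.1, fun x hx y hy hxy a b ha hb hab => ?_⟩
  have h := mul_lt_mul_of_pos_left (hf.2 hx hy hxy ha hb hab) hc
  simp only [smul_eq_mul] at h ⊢
  linarith

theorem hasDerivAt_secondDiff {f f' : ℝ → ℝ} {x : ℝ}
    (hnext : HasDerivAt f (f' (x + 1)) (x + 1)) (hcur : HasDerivAt f (f' x) x)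
    (hprev : HasDerivAt f (f' (x - 1)) (x - 1)) :
    HasDerivAt (secondDiff f) (secondDiff f' x) x :=
  ((hnext.comp_add_const x 1).sub (hcur.const_mul 2)).add (hprev.comp_sub_const x 1)

theorem strictConvexOn_secondDiff {f f' f'' : ℝ → ℝ} {a : ℝ} (hc : ContinuousOn f (Ici a))
    (hf : ∀ x ∈ Ioi a, HasDerivAt f (f' x) x) (hf' : ∀ x ∈ Ioi a, HasDerivAt f' (f'' x) x)
    (hf'' : StrictConvexOn ℝ (Ioi a) f'') : StrictConvexOn ℝ (Ici (a + 1)) (secondDiff f) := by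
  have hmem {x : ℝ} (hx : a + 1 < x) : x + 1 ∈ Ioi a ∧ x ∈ Ioi a ∧ x - 1 ∈ Ioi a := by
    simp only [mem_Ioi]; refine ⟨?_, ?_, ?_⟩ <;> linarith
  have hderiv : EqOn (deriv (secondDiff f)) (secondDiff f') (Ioi (a + 1)) := fun x hx => by
    obtain ⟨hnext, hcur, hprev⟩ := hmem hx
    exact (hasDerivAt_secondDiff (hf _ hnext) (hf _ hcur) (hf _ hprev)).deriv
  have hmono : StrictMonoOn (secondDiff f') (Ioi (a + 1)) := by
    have hderiv' {x : ℝ} (hx : a + 1 < x) : HasDerivAt (secondDiff f') (secondDiff f'' x) x := by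
      obtain ⟨hnext, hcur, hprev⟩ := hmem hx
      exact hasDerivAt_secondDiff (hf' _ hnext) (hf' _ hcur) (hf' _ hprev)
    refine strictMonoOn_of_hasDerivWithinAt_pos (f' := secondDiff f'') (convex_Ioi _)
      (fun x hx => (hderiv' hx).continuousAt.continuousWithinAt) (fun x hx => ?_) (fun x hx => ?_)
    all_goals rw [interior_Ioi] at hx
    · exact (hderiv' hx).hasDerivWithinAt
    · obtain ⟨hnext, -, hprev⟩ := hmem hx
      exact hf''.secondDiff_pos hprev hnext
  refine StrictMonoOn.strictConvexOn_of_deriv (convex_Ici _) ?_ ?_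
  · have hshift (c : ℝ) (hc0 : 0 ≤ 1 + c) : ContinuousOn (fun x => f (x + c)) (Ici (a + 1)) :=
      hc.comp (continuousOn_id.add continuousOn_const) fun x hx => by
        simp only [mem_Ici] at hx ⊢; linarith
    have htwice := (continuousOn_const (c := (2 : ℝ))).mul (hshift 0 (by norm_num))
    refine (((hshift 1 (by norm_num)).sub htwice).add (hshift (-1) (by norm_num))).congr
      fun x _ => ?_
    simp [secondDiff, sub_eq_add_neg]
  · rw [interior_Ici]
    exact hmono.congr hderiv.symm

theorem strictConvexOn_rpow_of_neg {q : ℝ} (hq : q < 0) :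
    StrictConvexOn ℝ (Ioi 0) fun x : ℝ => x ^ q := by
  refine strictConvexOn_of_deriv2_pos' (convex_Ioi 0)
    (fun x hx => (Real.continuousAt_rpow_const x q (Or.inl hx.ne')).continuousWithinAt)
    fun x hx => ?_
  rw [Real.iter_deriv_rpow_const]
  have hpoch : (descPochhammer ℝ 2).eval q = q * (q - 1) := by simp [descPochhammer_succ_right]
  rw [hpoch]
  exact mul_pos (mul_pos_of_neg_of_neg hq (by linarith)) (Real.rpow_pos_of_pos hx _)

theorem strictConvexOn_secondDiff_rpow {p : ℝ} (hp₁ : 1 < p) (hp₂ : p < 2) :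
    StrictConvexOn ℝ (Ici 1) (secondDiff fun x => x ^ p) := by
  have hderiv (r : ℝ) {x : ℝ} (hx : x ∈ Ioi (0 : ℝ)) :
      HasDerivAt (fun x => x ^ r) (r * x ^ (r - 1)) x :=
    Real.hasDerivAt_rpow_const (Or.inl (ne_of_gt hx))
  simpa using strictConvexOn_secondDiff (a := 0)
    ((Real.continuous_rpow_const (by linarith)).continuousOn)
    (fun x hx => hderiv p hx) (fun x hx => (hderiv (p - 1) hx).const_mul p)
    (((strictConvexOn_rpow_of_neg (by linarith : p - 1 - 1 < 0)).const_mul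
      (by linarith : 0 < p - 1)).const_mul (by linarith : 0 < p))

/-- For β ∈ (1/2,1) and integer l ≥ 2, the fourth difference
(l+2)^(3-2β) - 4(l+1)^(3-2β) + 6 l^(3-2β) - 4(l-1)^(3-2β) + (l-2)^(3-2β) is positive. -/
theorem stmt_3 (β : ℝ) (hβ : β ∈ Set.Ioo (1/2 : ℝ) 1) (l : ℤ) (hl : 2 ≤ l) :
    ((l : ℝ) + 2) ^ (3 - 2 * β) - 4 * ((l : ℝ) + 1) ^ (3 - 2 * β)
      + 6 * (l : ℝ) ^ (3 - 2 * β) - 4 * ((l : ℝ) - 1) ^ (3 - 2 * β)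
      + ((l : ℝ) - 2) ^ (3 - 2 * β) > 0 := by
  obtain ⟨hβ₁, hβ₂⟩ := hβ
  have hl' : (2 : ℝ) ≤ l := by exact_mod_cast hl
  have hconvex := strictConvexOn_secondDiff_rpow (p := 3 - 2 * β) (by linarith) (by linarith)
  have h := hconvex.secondDiff_pos (x := l) (by simp only [mem_Ici]; linarith)
    (by simp only [mem_Ici]; linarith)
  rwa [secondDiff_secondDiff] at h
end

section
/- Let β ∈ (1/2, 1) and h ∈ (0, 1/7]. Then -1 + 3(1-h)^(3-2β) - 3(1-2h)^(3-2β) + (1-3h)^(3-2β) > 0. -/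
/-!
With `p = 3 - 2β ∈ (1, 2)`, the left-hand side is minus the third forward difference of `x ↦ x ^ p`
with step `h`, starting at `1 - 3h > 0`. Grouping it as a second difference of the first difference
`g x = (x + h) ^ p - x ^ p`, it is positive because `g` is strictly concave on `(0, ∞)`: its
derivative `p ((x + h) ^ (p - 1) - x ^ (p - 1))` is strictly decreasing, since the derivative of
that is `p (p - 1) ((x + h) ^ (p - 2) - x ^ (p - 2)) < 0`.
-/

open Set

namespace Real

lemma hasDerivAt_rpow_add_sub_rpow {p h x : ℝ} (hh : 0 ≤ h) (hx : 0 < x) :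
    HasDerivAt (fun y => (y + h) ^ p - y ^ p) (p * ((x + h) ^ (p - 1) - x ^ (p - 1))) x := by
  have hshift : HasDerivAt (fun y => (y + h) ^ p) (1 * p * (x + h) ^ (p - 1)) x :=
    ((hasDerivAt_id x).add_const h).rpow_const (Or.inl (by positivity))
  exact (hshift.fun_sub (hasDerivAt_rpow_const (Or.inl hx.ne'))).congr_deriv (by ring)

lemma strictAntiOn_rpow_add_sub_rpow {q h : ℝ} (hq₀ : 0 < q) (hq₁ : q < 1) (hh : 0 < h) :
    StrictAntiOn (fun x => (x + h) ^ q - x ^ q) (Ioi 0) := by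
  refine strictAntiOn_of_deriv_neg (convex_Ioi 0)
    (fun x hx => (hasDerivAt_rpow_add_sub_rpow hh.le hx).continuousAt.continuousWithinAt)
    fun x hx => ?_
  rw [interior_Ioi] at hx
  rw [(hasDerivAt_rpow_add_sub_rpow hh.le hx).deriv]
  have hlt : (x + h) ^ (q - 1) < x ^ (q - 1) :=
    rpow_lt_rpow_of_neg hx (by linarith) (by linarith)
  nlinarith

lemma strictConcaveOn_rpow_add_sub_rpow {p h : ℝ} (hp₁ : 1 < p) (hp₂ : p < 2) (hh : 0 < h) :
    StrictConcaveOn ℝ (Ioi 0) fun x => (x + h) ^ p - x ^ p := by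
  refine StrictAntiOn.strictConcaveOn_of_deriv (convex_Ioi 0)
    (fun x hx => (hasDerivAt_rpow_add_sub_rpow hh.le hx).continuousAt.continuousWithinAt) ?_
  rw [interior_Ioi]
  intro x hx y hy hxy
  rw [(hasDerivAt_rpow_add_sub_rpow hh.le hx).deriv, (hasDerivAt_rpow_add_sub_rpow hh.le hy).deriv]
  exact mul_lt_mul_of_pos_left
    (strictAntiOn_rpow_add_sub_rpow (by linarith) (by linarith) hh hx hy hxy) (by linarith)

lemma rpow_third_forward_difference_neg {p h x : ℝ} (hp₁ : 1 < p) (hp₂ : p < 2) (hh : 0 < h)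
    (hx : 0 < x) :
    (x + 3 * h) ^ p - 3 * (x + 2 * h) ^ p + 3 * (x + h) ^ p - x ^ p < 0 := by
  have hmid := (strictConcaveOn_rpow_add_sub_rpow hp₁ hp₂ hh).2 (x := x) (y := x + 2 * h)
    hx (by simp only [mem_Ioi]; linarith) (by linarith) one_half_pos one_half_pos (by norm_num)
  simp only [smul_eq_mul] at hmid
  rw [show 1 / 2 * x + 1 / 2 * (x + 2 * h) = x + h by ring, show x + h + h = x + 2 * h by ring,
    show x + 2 * h + h = x + 3 * h by ring] at hmid
  linarith

end Real

/-- For β ∈ (1/2,1) and h ∈ (0,1/7]: -1 + 3(1-h)^(3-2β) - 3(1-2h)^(3-2β) + (1-3h)^(3-2β) > 0. -/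
theorem stmt_6 (β h : ℝ) (hβ : β ∈ Set.Ioo (1/2 : ℝ) 1)
    (hh : h ∈ Set.Ioc (0 : ℝ) (1/7)) :
    -1 + 3 * (1 - h) ^ (3 - 2 * β) - 3 * (1 - 2 * h) ^ (3 - 2 * β)
      + (1 - 3 * h) ^ (3 - 2 * β) > 0 := by
  obtain ⟨hβ₁, hβ₂⟩ := hβ
  obtain ⟨hh₀, hh₁⟩ := hh
  have hdiff := Real.rpow_third_forward_difference_neg (p := 3 - 2 * β) (by linarith) (by linarith)
    hh₀ (x := 1 - 3 * h) (by linarith)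
  rw [show 1 - 3 * h + 3 * h = 1 by ring, show 1 - 3 * h + 2 * h = 1 - h by ring,
    show 1 - 3 * h + h = 1 - 2 * h by ring, Real.one_rpow] at hdiff
  linarith
end

section
/- Let S be the damped-Jacobi iteration matrix S = I - ωD^{-1}C for a symmetric positive definite matrix C with diagonal D, and suppose ρ(D^{-1}C) ≤ η and 0 < ω < 2/η. Then for every error vector e, ⟨C·Se, Se⟩ ≤ ⟨Ce, e⟩ - ω(2 - ωη)·⟨D^{-1}Ce, Ce⟩. -/
/-!
With `z = D⁻¹ C e` we have `S e = e - ω z`, and expanding the energy norm gives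
`⟨C S e, S e⟩ = ⟨C e, e⟩ - 2ω ⟨D z, z⟩ + ω² ⟨C z, z⟩`. So everything reduces to the
quadratic-form bound `C ≤ η D`. Since `D` is a positive diagonal matrix, `D⁻¹ C` is similar to
the symmetric matrix `D^{-1/2} C D^{-1/2}`, whose (real) spectrum is therefore bounded by
`ρ(D⁻¹ C) ≤ η`; this gives `D^{-1/2} C D^{-1/2} ≤ η I` and hence `C ≤ η D`.
-/

open Matrix
open scoped MatrixOrder

namespace Matrix

variable {n : Type*} [Fintype n] [DecidableEq n]

theorem ofReal_mem_spectrum_map_ofReal {A : Matrix n n ℝ} {μ : ℝ} (h : μ ∈ spectrum ℝ A) :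
    (μ : ℂ) ∈ spectrum ℂ (A.map (fun x : ℝ => (x : ℂ))) := by
  rw [mem_spectrum_iff_isRoot_charpoly] at h ⊢
  exact (charpoly_map A Complex.ofRealHom).symm ▸ h.map

theorem exists_isHermitian_mul_self_eq_inv_diagonal {d : n → ℝ} (hd : ∀ i, 0 < d i) :
    ∃ P : Matrix n n ℝ, P.IsHermitian ∧ P * P = (diagonal d)⁻¹ := by
  refine ⟨diagonal fun i => (√(d i))⁻¹, isHermitian_diagonal _, ?_⟩
  refine (inv_eq_left_inv ?_).symm
  rw [diagonal_mul_diagonal, diagonal_mul_diagonal, ← diagonal_one]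
  congr 1
  ext i
  simp [← mul_inv, Real.mul_self_sqrt (hd i).le, (hd i).ne']

/-- Conjugating by a square root `P` of `D⁻¹` turns `D⁻¹ * A` into the symmetric matrix
`P * A * P` with the same spectrum. -/
theorem le_smul_of_spectrum_inv_mul_le {A D P : Matrix n n ℝ} {η : ℝ} (hA : A.IsHermitian)
    (hD : IsUnit D) (hP : P.IsHermitian) (hPD : P * P = D⁻¹)
    (h : ∀ x ∈ spectrum ℝ (D⁻¹ * A), x ≤ η) : A ≤ η • D := by
  have hPu : IsUnit P := isUnit_of_mul_isUnit_left (hPD ▸ (isUnit_nonsing_inv_iff.mpr hD))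
  have hspec : spectrum ℝ (P * A * P) = spectrum ℝ (D⁻¹ * A) := by
    have hconj : D⁻¹ * A =
        hPu.unit * (P * A * P) * ((hPu.unit⁻¹ : (Matrix n n ℝ)ˣ) : Matrix n n ℝ) := by
      rw [coe_units_inv, IsUnit.unit_spec, ← hPD]
      simp only [Matrix.mul_assoc, mul_nonsing_inv _ ((isUnit_iff_isUnit_det P).mp hPu),
        Matrix.mul_one]
    rw [hconj, spectrum.units_conjugate]
  have hM_herm : (P * A * P).IsHermitian := by
    simpa only [hP.eq] using isHermitian_conjTranspose_mul_mul P hA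
  have hM : P * A * P ≤ algebraMap ℝ _ η := le_algebraMap_of_spectrum_le (hspec ▸ h) hM_herm
  have hPinv : star P⁻¹ = P⁻¹ := hP.inv.eq
  have hPdet := (isUnit_iff_isUnit_det P).mp hPu
  convert star_left_conjugate_le_conjugate hM P⁻¹ using 1
  · rw [hPinv, Matrix.mul_assoc, Matrix.mul_assoc, mul_nonsing_inv _ hPdet, Matrix.mul_one,
      ← Matrix.mul_assoc, nonsing_inv_mul _ hPdet, Matrix.one_mul]
  · rw [hPinv, Algebra.algebraMap_eq_smul_one, Matrix.mul_smul, Matrix.smul_mul, Matrix.mul_one,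
      ← mul_inv_rev, hPD, nonsing_inv_nonsing_inv _ ((isUnit_iff_isUnit_det D).mp hD)]

theorem dotProduct_mulVec_dampedJacobi_le {C D : Matrix n n ℝ} (hC : C.IsHermitian)
    (hD : IsUnit D) {η : ℝ} (hCD : C ≤ η • D) (ω : ℝ) (e : n → ℝ) :
    C *ᵥ ((1 - ω • (D⁻¹ * C)) *ᵥ e) ⬝ᵥ (1 - ω • (D⁻¹ * C)) *ᵥ e ≤
      C *ᵥ e ⬝ᵥ e - ω * (2 - ω * η) * (D⁻¹ *ᵥ (C *ᵥ e) ⬝ᵥ C *ᵥ e) := by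
  set z := D⁻¹ *ᵥ (C *ᵥ e) with hz
  have hSe : (1 - ω • (D⁻¹ * C)) *ᵥ e = e - ω • z := by
    rw [sub_mulVec, one_mulVec, smul_mulVec, ← mulVec_mulVec]
  have hDz : D *ᵥ z = C *ᵥ e := by
    rw [hz, mulVec_mulVec, mul_nonsing_inv _ ((isUnit_iff_isUnit_det D).mp hD), one_mulVec]
  have hsymm : C *ᵥ z ⬝ᵥ e = C *ᵥ e ⬝ᵥ z := by
    rw [dotProduct_comm, dotProduct_mulVec, ← mulVec_transpose,
      ← conjTranspose_eq_transpose_of_trivial, hC.eq]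
  have hform : C *ᵥ z ⬝ᵥ z ≤ η * (C *ᵥ e ⬝ᵥ z) := by
    have := (le_iff.mp hCD).dotProduct_mulVec_nonneg z
    simp only [star_trivial, sub_mulVec, smul_mulVec, hDz, dotProduct_sub, dotProduct_smul,
      smul_eq_mul, sub_nonneg] at this
    rwa [dotProduct_comm z, dotProduct_comm z] at this
  have hexpand : C *ᵥ (e - ω • z) ⬝ᵥ (e - ω • z) =
      C *ᵥ e ⬝ᵥ e - 2 * ω * (C *ᵥ e ⬝ᵥ z) + ω ^ 2 * (C *ᵥ z ⬝ᵥ z) := by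
    simp only [mulVec_sub, mulVec_smul, sub_dotProduct, dotProduct_sub, smul_dotProduct,
      dotProduct_smul, hsymm, smul_eq_mul]
    ring
  rw [hSe, hexpand, dotProduct_comm z]
  linarith [mul_le_mul_of_nonneg_left hform (sq_nonneg ω)]

end Matrix

theorem stmt_15_general (n : ℕ) (C : Matrix (Fin n) (Fin n) ℝ) (hC : C.PosDef)
    (D : Matrix (Fin n) (Fin n) ℝ) (hD : D = Matrix.diagonal fun i => C i i)
    (η ω : ℝ)
    (hρ : ∀ μ ∈ spectrum ℂ ((D⁻¹ * C).map (fun x : ℝ => (x : ℂ))), ‖μ‖ ≤ η)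
    (S : Matrix (Fin n) (Fin n) ℝ) (hS : S = 1 - ω • (D⁻¹ * C)) :
    ∀ e : Fin n → ℝ,
      C.mulVec (S.mulVec e) ⬝ᵥ S.mulVec e ≤
        C.mulVec e ⬝ᵥ e - ω * (2 - ω * η) * (D⁻¹.mulVec (C.mulVec e) ⬝ᵥ C.mulVec e) := by
  intro e
  have hdiag : ∀ i, 0 < C i i := fun _ => hC.diag_pos
  have hDu : IsUnit D := by
    rw [hD, isUnit_diagonal, Pi.isUnit_iff]
    exact fun i => (hdiag i).ne'.isUnit
  obtain ⟨P, hP, hPD⟩ := exists_isHermitian_mul_self_eq_inv_diagonal hdiag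
  have hspec : ∀ x ∈ spectrum ℝ (D⁻¹ * C), x ≤ η := fun x hx =>
    (le_abs_self x).trans (by simpa using hρ _ (ofReal_mem_spectrum_map_ofReal hx))
  have hCD : C ≤ η • D := le_smul_of_spectrum_inv_mul_le hC.isHermitian hDu hP (hD ▸ hPD) hspec
  exact hS ▸ dotProduct_mulVec_dampedJacobi_le hC.isHermitian hDu hCD ω e

/-- Smoothing property of damped Jacobi: for S = I - ωD⁻¹C with C symmetric positive
definite, D = diag(C), ρ(D⁻¹C) ≤ η and 0 < ω < 2/η, we have
⟨C Se, Se⟩ ≤ ⟨Ce, e⟩ - ω(2 - ωη)⟨D⁻¹Ce, Ce⟩ for all e. -/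
theorem stmt_15 (n : ℕ) (C : Matrix (Fin n) (Fin n) ℝ) (hC : C.PosDef)
    (D : Matrix (Fin n) (Fin n) ℝ) (hD : D = Matrix.diagonal fun i => C i i)
    (η ω : ℝ) (hη : 0 < η)
    (hρ : ∀ μ ∈ spectrum ℂ ((D⁻¹ * C).map (fun x : ℝ => (x : ℂ))), ‖μ‖ ≤ η)
    (hω : 0 < ω) (hω2 : ω < 2 / η)
    (S : Matrix (Fin n) (Fin n) ℝ) (hS : S = 1 - ω • (D⁻¹ * C)) :
    ∀ e : Fin n → ℝ,
      C.mulVec (S.mulVec e) ⬝ᵥ S.mulVec e ≤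
        C.mulVec e ⬝ᵥ e - ω * (2 - ω * η) * (D⁻¹.mulVec (C.mulVec e) ⬝ᵥ C.mulVec e) :=
  stmt_15_general n C hC D hD η ω hρ S hS
end

section
/- Let M_{h,H} be a two-grid iteration operator of the form M = S(I - P(PᵀCP)^{-1}PᵀC), where C is symmetric positive definite and P has full column rank. Suppose the smoothing property ‖Se‖₁² ≤ ‖e‖₁² - σ₁‖e‖₂² holds for all e, and the approximation property min_{e_c} ‖e - Pe_c‖₀² ≤ σ₂‖e‖₁² holds for all e, where ‖e‖₀² = ⟨De,e⟩, ‖e‖₁² = ⟨Ce,e⟩, ‖e‖₂² = ⟨D^{-1}Ce, Ce⟩, D = diag(C), and σ₂ ≥ σ₁ > 0. Then ‖M_{h,H}‖₁ ≤ √(1 - σ₁/σ₂). -/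
/-!
After the coarse-grid correction `K = I - P(PᵀCP)⁻¹PᵀC`, the error `v = Ke` is the part of `e`
that is `C`-orthogonal to the range of `P`, so `‖v‖₁ ≤ ‖e‖₁` and `⟨Cv, Pw⟩ = 0` for all `w`.
For such `v`, with `ec` from the approximation property,
`‖v‖₁² = ⟨Cv, v - Pec⟩ = ⟨D(D⁻¹Cv), v - Pec⟩ ≤ ‖v‖₂ ‖v - Pec‖₀ ≤ ‖v‖₂ √σ₂ ‖v‖₁`
by Cauchy–Schwarz in the `D`-inner product, i.e. `‖v‖₁² ≤ σ₂ ‖v‖₂²`.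
The smoothing property then gives `‖Sv‖₁² ≤ ‖v‖₁² - σ₁‖v‖₂² ≤ (1 - σ₁/σ₂)‖v‖₁²`.
-/

open Matrix

namespace Matrix

variable {ι κ : Type*} [Fintype ι] [Fintype κ]

lemma IsHermitian.mulVec_dotProduct_comm {A : Matrix ι ι ℝ} (hA : A.IsHermitian) (x y : ι → ℝ) :
    A *ᵥ x ⬝ᵥ y = A *ᵥ y ⬝ᵥ x := by
  have hsymm : Aᵀ = A := by rw [← conjTranspose_eq_transpose_of_trivial, hA.eq]
  rw [dotProduct_comm (A *ᵥ x), ← dotProduct_transpose_mulVec, hsymm, dotProduct_comm]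

lemma PosSemidef.mulVec_dotProduct_self_nonneg {A : Matrix ι ι ℝ} (hA : A.PosSemidef)
    (x : ι → ℝ) : 0 ≤ A *ᵥ x ⬝ᵥ x :=
  dotProduct_comm x (A *ᵥ x) ▸ hA.dotProduct_mulVec_nonneg x

lemma PosSemidef.sq_mulVec_dotProduct_le {A : Matrix ι ι ℝ} (hA : A.PosSemidef) (x y : ι → ℝ) :
    (A *ᵥ x ⬝ᵥ y) ^ 2 ≤ (A *ᵥ x ⬝ᵥ x) * (A *ᵥ y ⬝ᵥ y) := by
  classical
  have hcs := LinearMap.BilinForm.apply_mul_apply_le_of_forall_zero_le (toLinearMap₂' ℝ A)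
    (fun z => by simpa [toLinearMap₂'_apply'] using hA.dotProduct_mulVec_nonneg z) x y
  simp only [toLinearMap₂'_apply', dotProduct_comm x, dotProduct_comm y] at hcs
  rwa [hA.1.mulVec_dotProduct_comm y x, ← sq] at hcs

lemma PosSemidef.mulVec_dotProduct_le_of_orthogonal {A : Matrix ι ι ℝ} (hA : A.PosSemidef)
    {v u : ι → ℝ} (h : A *ᵥ v ⬝ᵥ u = 0) : A *ᵥ v ⬝ᵥ v ≤ A *ᵥ (v + u) ⬝ᵥ (v + u) := by
  have hu := hA.mulVec_dotProduct_self_nonneg u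
  have hvu := hA.1.mulVec_dotProduct_comm u v
  simp only [mulVec_add, add_dotProduct, dotProduct_add]
  linarith

lemma PosDef.sq_dotProduct_le_inv [DecidableEq ι] {D : Matrix ι ι ℝ} (hD : D.PosDef)
    (r y : ι → ℝ) : (r ⬝ᵥ y) ^ 2 ≤ (D⁻¹ *ᵥ r ⬝ᵥ r) * (D *ᵥ y ⬝ᵥ y) := by
  have hr : D *ᵥ (D⁻¹ *ᵥ r) = r := by
    rw [mulVec_mulVec, mul_nonsing_inv _ (D.isUnit_iff_isUnit_det.mp hD.isUnit), one_mulVec]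
  simpa only [hr, dotProduct_comm r] using hD.posSemidef.sq_mulVec_dotProduct_le (D⁻¹ *ᵥ r) y

lemma PosSemidef.mulVec_dotProduct_le_of_approx [DecidableEq ι] {C D : Matrix ι ι ℝ}
    (hC : C.PosSemidef) (hD : D.PosDef) {σ : ℝ} (hσ : 0 ≤ σ) {v u : ι → ℝ}
    (horth : C *ᵥ v ⬝ᵥ u = 0) (happrox : D *ᵥ (v - u) ⬝ᵥ (v - u) ≤ σ * (C *ᵥ v ⬝ᵥ v)) :
    C *ᵥ v ⬝ᵥ v ≤ σ * (D⁻¹ *ᵥ (C *ᵥ v) ⬝ᵥ C *ᵥ v) := by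
  set a := C *ᵥ v ⬝ᵥ v
  set b := D⁻¹ *ᵥ (C *ᵥ v) ⬝ᵥ C *ᵥ v
  have ha : 0 ≤ a := hC.mulVec_dotProduct_self_nonneg v
  have hb : 0 ≤ b := hD.inv.posSemidef.mulVec_dotProduct_self_nonneg (C *ᵥ v)
  have hcs : a ^ 2 ≤ b * (σ * a) := by
    have h := hD.sq_dotProduct_le_inv (C *ᵥ v) (v - u)
    rw [dotProduct_sub, horth, sub_zero] at h
    exact h.trans (mul_le_mul_of_nonneg_left happrox hb)
  nlinarith [mul_nonneg hσ hb]

section CoarseGridCorrection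

variable [DecidableEq ι] [DecidableEq κ] {C : Matrix ι ι ℝ} {P : Matrix ι κ ℝ}

/-- The `C`-orthogonal projection onto the `C`-orthogonal complement of the range of `P`. -/
noncomputable def coarseGridCorrection (C : Matrix ι ι ℝ) (P : Matrix ι κ ℝ) : Matrix ι ι ℝ :=
  1 - P * (Pᵀ * C * P)⁻¹ * Pᵀ * C

lemma transpose_mul_mul_coarseGridCorrection (hQ : IsUnit (Pᵀ * C * P).det) :
    Pᵀ * C * coarseGridCorrection C P = 0 := by
  have h : Pᵀ * C * (P * (Pᵀ * C * P)⁻¹ * Pᵀ * C) = Pᵀ * C := by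
    calc _ = (Pᵀ * C * P) * (Pᵀ * C * P)⁻¹ * (Pᵀ * C) := by simp only [Matrix.mul_assoc]
      _ = Pᵀ * C := by rw [mul_nonsing_inv _ hQ, Matrix.one_mul]
  rw [coarseGridCorrection, Matrix.mul_sub, Matrix.mul_one, h, sub_self]

lemma mulVec_coarseGridCorrection_dotProduct_mulVec_eq_zero (hQ : IsUnit (Pᵀ * C * P).det)
    (e : ι → ℝ) (w : κ → ℝ) : C *ᵥ (coarseGridCorrection C P *ᵥ e) ⬝ᵥ P *ᵥ w = 0 := by
  rw [dotProduct_mulVec, ← mulVec_transpose, mulVec_mulVec, mulVec_mulVec,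
    transpose_mul_mul_coarseGridCorrection hQ, zero_mulVec, zero_dotProduct]

lemma coarseGridCorrection_mulVec_add (e : ι → ℝ) :
    coarseGridCorrection C P *ᵥ e + P *ᵥ (((Pᵀ * C * P)⁻¹ * Pᵀ * C) *ᵥ e) = e := by
  rw [coarseGridCorrection, sub_mulVec, one_mulVec, mulVec_mulVec]
  simp only [Matrix.mul_assoc, sub_add_cancel]

lemma coarseGridCorrection_energy_le (hC : C.PosSemidef) (hQ : IsUnit (Pᵀ * C * P).det)
    (e : ι → ℝ) :
    C *ᵥ (coarseGridCorrection C P *ᵥ e) ⬝ᵥ coarseGridCorrection C P *ᵥ e ≤ C *ᵥ e ⬝ᵥ e := by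
  have h := hC.mulVec_dotProduct_le_of_orthogonal
    (mulVec_coarseGridCorrection_dotProduct_mulVec_eq_zero hQ e (((Pᵀ * C * P)⁻¹ * Pᵀ * C) *ᵥ e))
  rwa [coarseGridCorrection_mulVec_add] at h

end CoarseGridCorrection

end Matrix

/-- Classical Ruge–Stüben two-grid convergence: if the smoothing property with
constant σ₁ and the approximation property with constant σ₂ ≥ σ₁ > 0 hold, then
the two-grid operator M = S(I - P(PᵀCP)⁻¹PᵀC) satisfies ‖Me‖₁² ≤ (1 - σ₁/σ₂)‖e‖₁²,
i.e. ‖M‖₁ ≤ √(1 - σ₁/σ₂). -/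
theorem stmt_16 (n m : ℕ) (C : Matrix (Fin n) (Fin n) ℝ) (hC : C.PosDef)
    (D : Matrix (Fin n) (Fin n) ℝ) (hD : D = Matrix.diagonal fun i => C i i)
    (P : Matrix (Fin n) (Fin m) ℝ) (hP : Function.Injective P.mulVec)
    (S : Matrix (Fin n) (Fin n) ℝ) (σ₁ σ₂ : ℝ) (hσ₁ : 0 < σ₁) (hσ : σ₁ ≤ σ₂)
    (hsmooth : ∀ e : Fin n → ℝ,
      C.mulVec (S.mulVec e) ⬝ᵥ S.mulVec e ≤
        C.mulVec e ⬝ᵥ e - σ₁ * (D⁻¹.mulVec (C.mulVec e) ⬝ᵥ C.mulVec e))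
    (happrox : ∀ e : Fin n → ℝ, ∃ ec : Fin m → ℝ,
      D.mulVec (e - P.mulVec ec) ⬝ᵥ (e - P.mulVec ec) ≤ σ₂ * (C.mulVec e ⬝ᵥ e))
    (Mhh : Matrix (Fin n) (Fin n) ℝ)
    (hM : Mhh = S * (1 - P * (Pᵀ * C * P)⁻¹ * Pᵀ * C)) :
    ∀ e : Fin n → ℝ,
      C.mulVec (Mhh.mulVec e) ⬝ᵥ Mhh.mulVec e ≤ (1 - σ₁ / σ₂) * (C.mulVec e ⬝ᵥ e) := by
  intro e
  have hσ₂ : 0 < σ₂ := hσ₁.trans_le hσ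
  have hQ : IsUnit (Pᵀ * C * P).det := by
    simpa using (hC.conjTranspose_mul_mul_same hP).det_pos.ne'.isUnit
  have hDpos : D.PosDef := hD ▸ PosDef.diagonal fun _ => hC.diag_pos
  set v := coarseGridCorrection C P *ᵥ e
  obtain ⟨ec, hec⟩ := happrox v
  have hv : C *ᵥ v ⬝ᵥ v ≤ σ₂ * (D⁻¹ *ᵥ (C *ᵥ v) ⬝ᵥ C *ᵥ v) :=
    hC.posSemidef.mulVec_dotProduct_le_of_approx hDpos hσ₂.le
      (mulVec_coarseGridCorrection_dotProduct_mulVec_eq_zero hQ e ec) hec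
  have hshrink : σ₁ / σ₂ * (C *ᵥ v ⬝ᵥ v) ≤ σ₁ * (D⁻¹ *ᵥ (C *ᵥ v) ⬝ᵥ C *ᵥ v) := by
    rw [div_mul_eq_mul_div, div_le_iff₀ hσ₂]
    nlinarith
  have hcontr : 0 ≤ 1 - σ₁ / σ₂ := sub_nonneg.mpr (div_le_one_of_le₀ hσ hσ₂.le)
  rw [hM, ← mulVec_mulVec]
  calc C *ᵥ (S *ᵥ v) ⬝ᵥ S *ᵥ v
      ≤ C *ᵥ v ⬝ᵥ v - σ₁ * (D⁻¹ *ᵥ (C *ᵥ v) ⬝ᵥ C *ᵥ v) := hsmooth v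
    _ ≤ (1 - σ₁ / σ₂) * (C *ᵥ v ⬝ᵥ v) := by linarith
    _ ≤ (1 - σ₁ / σ₂) * (C *ᵥ e ⬝ᵥ e) :=
      mul_le_mul_of_nonneg_left (coarseGridCorrection_energy_le hC.posSemidef hQ e) hcontr
end

section
/- For β ∈ (1/2, 1), the ratio of the second to the first off-diagonal coefficients of the fractional stiffness matrix satisfies 0 < (4^(3-2β) - 4·3^(3-2β) + 6·2^(3-2β) - 4)/(3^(3-2β) - 2^(5-2β) + 7) < 1; i.e., |a_{1,3}| < |a_{1,2}|. -/
/-!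
Put `t = 2 ^ (3 - 2β) ∈ (2, 4)` and `c = log₂ 3 ∈ (19/12, 8/5)`, so that `4 ^ (3 - 2β) = t²`,
`3 ^ (3 - 2β) = t ^ c` and `2 ^ (5 - 2β) = 4t`. Since `c < 2` and `c (c - 1)` is large enough, the
functions `A t ^ c - t²` (`A = 4, 5`) are strictly convex on `[2, 4]`. The numerator is positive
because `4 t ^ c - t²` lies below its chord `6t - 4` between `t = 2` and `t = 4`; the ratio is
below `1` because `5 t ^ c - t²` lies above its tangent at `t = 4`, whose slope `45c/4 - 8` is less
than `10`.
-/

open Real Set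

lemma logb_two_three_mem_Ioo : logb 2 3 ∈ Ioo (19 / 12 : ℝ) (8 / 5) := by
  have hlog2 : 0 < log 2 := log_pos (by norm_num)
  rw [logb, mem_Ioo, lt_div_iff₀ hlog2, div_lt_iff₀ hlog2]
  have h19 := log_lt_log (by norm_num) (show (2 : ℝ) ^ 19 < 3 ^ 12 by norm_num)
  have h8 := log_lt_log (by norm_num) (show (3 : ℝ) ^ 5 < 2 ^ 8 by norm_num)
  simp only [log_pow, Nat.cast_ofNat] at h19 h8
  constructor <;> linarith

lemma rpow_rpow_logb {b x : ℝ} (hb : 0 < b) (hb₁ : b ≠ 1) (hx : 0 < x) (s : ℝ) :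
    (b ^ s) ^ logb b x = x ^ s := by
  rw [← rpow_mul hb.le, mul_comm, rpow_mul hb.le, rpow_logb hb hb₁ hx]

lemma four_rpow_logb_two_three : (4 : ℝ) ^ logb 2 3 = 9 := by
  simpa [show (2 : ℝ) ^ (2 : ℝ) = 4 by norm_num, show (3 : ℝ) ^ (2 : ℝ) = 9 by norm_num]
    using rpow_rpow_logb (b := 2) (x := 3) (by norm_num) (by norm_num) (by norm_num) 2

lemma hasDerivAt_mul_rpow_sub_sq (A c : ℝ) {x : ℝ} (hx : x ≠ 0) :
    HasDerivAt (fun t : ℝ => A * t ^ c - t ^ 2) (A * (c * x ^ (c - 1)) - 2 * x) x := by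
  have hpow : HasDerivAt (fun t : ℝ => t ^ 2) (2 * x) x := by simpa using hasDerivAt_pow 2 x
  exact ((hasDerivAt_rpow_const (Or.inl hx)).const_mul A).sub hpow

lemma strictConvexOn_mul_rpow_sub_sq {A c a b : ℝ} (ha : 0 < a) (hc : c < 2)
    (hb : 2 < A * c * (c - 1) * b ^ (c - 2)) :
    StrictConvexOn ℝ (Icc a b) (fun t : ℝ => A * t ^ c - t ^ 2) := by
  refine strictConvexOn_of_deriv2_pos (convex_Icc a b) ?_ fun x hx => ?_
  · exact ((continuousOn_id.rpow_const fun x hx => Or.inl (ha.trans_le hx.1).ne').const_smul A).sub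
      (continuousOn_pow 2)
  rw [interior_Icc] at hx
  have hx₀ : 0 < x := ha.trans hx.1
  have hderiv : deriv (fun t : ℝ => A * t ^ c - t ^ 2) =ᶠ[nhds x]
      fun y => A * (c * y ^ (c - 1)) - 2 * y :=
    Filter.eventuallyEq_of_mem (Ioi_mem_nhds hx₀) fun y hy =>
      (hasDerivAt_mul_rpow_sub_sq A c (ne_of_gt hy)).deriv
  have hderiv2 : HasDerivAt (fun y : ℝ => A * (c * y ^ (c - 1)) - 2 * y)
      (A * (c * ((c - 1) * x ^ (c - 2))) - 2) x := by
    have := (((hasDerivAt_rpow_const (p := c - 1) (Or.inl hx₀.ne')).const_mul c).const_mul A).sub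
      ((hasDerivAt_id x).const_mul 2)
    exact this.congr_deriv (by rw [sub_sub, one_add_one_eq_two, mul_one])
  rw [Function.iterate_succ_apply', Function.iterate_one, hderiv.deriv_eq, hderiv2.deriv]
  have hpow : b ^ (c - 2) < x ^ (c - 2) := rpow_lt_rpow_of_neg hx₀ hx.2 (by linarith)
  have hcoef : 0 < A * c * (c - 1) :=
    pos_of_mul_pos_left (by linarith) (rpow_pos_of_pos (hx₀.trans hx.2) _).le
  nlinarith [mul_lt_mul_of_pos_left hpow hcoef]

lemma four_mul_rpow_logb_lt {t : ℝ} (ht : t ∈ Ioo (2 : ℝ) 4) :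
    4 * t ^ logb 2 3 < t ^ 2 + 6 * t - 4 := by
  obtain ⟨hc₁, hc₂⟩ := logb_two_three_mem_Ioo
  set c := logb 2 3
  have h2c : (2 : ℝ) ^ c = 3 := rpow_logb (by norm_num) (by norm_num) (by norm_num)
  have h4c : (4 : ℝ) ^ c = 9 := four_rpow_logb_two_three
  have h4c2 : (4 : ℝ) ^ (c - 2) = 9 / 16 := by rw [rpow_sub (by norm_num), h4c]; norm_num
  have hconv := strictConvexOn_mul_rpow_sub_sq (A := 4) (c := c) (a := 2) (b := 4) two_pos
    (by linarith) (by rw [h4c2]; nlinarith)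
  have key := hconv.2 (left_mem_Icc.2 (by norm_num)) (right_mem_Icc.2 (by norm_num))
    (by norm_num) (show 0 < (4 - t) / 2 by linarith [ht.2])
    (show 0 < (t - 2) / 2 by linarith [ht.1]) (by ring)
  simp only [smul_eq_mul, h2c, h4c] at key
  have harg : (4 - t) / 2 * 2 + (t - 2) / 2 * 4 = t := by ring
  rw [harg] at key
  norm_num at key
  linarith

lemma lt_five_mul_rpow_logb {t : ℝ} (ht : t ∈ Ioo (2 : ℝ) 4) :
    t ^ 2 + 10 * t - 11 < 5 * t ^ logb 2 3 := by
  obtain ⟨hc₁, hc₂⟩ := logb_two_three_mem_Ioo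
  set c := logb 2 3
  have h4c : (4 : ℝ) ^ c = 9 := four_rpow_logb_two_three
  have h4c1 : (4 : ℝ) ^ (c - 1) = 9 / 4 := by rw [rpow_sub (by norm_num), h4c, rpow_one]
  have h4c2 : (4 : ℝ) ^ (c - 2) = 9 / 16 := by rw [rpow_sub (by norm_num), h4c]; norm_num
  have hconv := strictConvexOn_mul_rpow_sub_sq (A := 5) (c := c) (a := 2) (b := 4) two_pos
    (by linarith) (by rw [h4c2]; nlinarith)
  have key := hconv.slope_lt_of_hasDerivAt (Ioo_subset_Icc_self ht) (right_mem_Icc.2 (by norm_num))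
    ht.2 (hasDerivAt_mul_rpow_sub_sq 5 c (by norm_num : (4 : ℝ) ≠ 0))
  rw [slope_def_field, h4c1, div_lt_iff₀ (by linarith [ht.2])] at key
  simp only [h4c] at key
  nlinarith [ht.2]

/-- For β ∈ (1/2,1), the ratio of the second to the first off-diagonal stiffness
coefficients satisfies 0 < (4^(3-2β) - 4·3^(3-2β) + 6·2^(3-2β) - 4)/(3^(3-2β) - 2^(5-2β) + 7) < 1. -/
theorem stmt_19 (β : ℝ) (hβ : β ∈ Set.Ioo (1/2 : ℝ) 1) :
    0 < ((4 : ℝ) ^ (3 - 2 * β) - 4 * (3 : ℝ) ^ (3 - 2 * β) + 6 * (2 : ℝ) ^ (3 - 2 * β) - 4) /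
        ((3 : ℝ) ^ (3 - 2 * β) - (2 : ℝ) ^ (5 - 2 * β) + 7) ∧
    ((4 : ℝ) ^ (3 - 2 * β) - 4 * (3 : ℝ) ^ (3 - 2 * β) + 6 * (2 : ℝ) ^ (3 - 2 * β) - 4) /
        ((3 : ℝ) ^ (3 - 2 * β) - (2 : ℝ) ^ (5 - 2 * β) + 7) < 1 := by
  set t : ℝ := 2 ^ (3 - 2 * β)
  have ht : t ∈ Ioo (2 : ℝ) 4 := by
    constructor
    · exact (rpow_one 2).symm.trans_lt
        (rpow_lt_rpow_of_exponent_lt one_lt_two (by linarith [hβ.2]))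
    · exact (rpow_lt_rpow_of_exponent_lt one_lt_two
        (show 3 - 2 * β < 2 by linarith [hβ.1])).trans_eq (by norm_num)
  have h3 : (3 : ℝ) ^ (3 - 2 * β) = t ^ logb 2 3 :=
    (rpow_rpow_logb (by norm_num) (by norm_num) (by norm_num) _).symm
  have h4 : (4 : ℝ) ^ (3 - 2 * β) = t ^ 2 := by
    rw [show (4 : ℝ) = 2 * 2 by norm_num, mul_rpow (by norm_num) (by norm_num), sq]
  have h2 : (2 : ℝ) ^ (5 - 2 * β) = 4 * t := by
    rw [show 5 - 2 * β = 2 + (3 - 2 * β) by ring, rpow_add two_pos, rpow_two]; norm_num [t]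
  rw [h3, h4, h2]
  have hnum := four_mul_rpow_logb_lt ht
  have hgap := lt_five_mul_rpow_logb ht
  have hden : 0 < t ^ logb 2 3 - 4 * t + 7 := by linarith
  exact ⟨div_pos (by linarith) hden, (div_lt_one hden).2 (by linarith)⟩
end
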